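/- arXiv:1807.01762 — 2 statements merged into one kernel-verified Lean document; each statement's English description precedes it below -/
import Mathlib

section
/- Let α satisfy E(ε)∫_0^∞ e^{-αt}S(t)dt = 1 with S(t) = exp{-(1+b)t + (1/c)∫_{e^{-ct}}^1 g_ε(v)/v dv}. Then α > 0 exists (the process is supercritical, E ξ(∞) > 1) if and only if (E(ε)/c) ∫_0^1 u^{(1+b)/c - 1} exp{ (1/c) ∫_u^1 g_ε(v)/v dv } du > 1. -/
open MeasureTheory intervalIntegral

open MeasureTheory intervalIntegral Set Filter
open scoped ENNReal Topology

noncomputable def Hf (g : ℝ → ℝ) (u : ℝ) : ℝ := ∫ v in u..1, g v / v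

noncomputable def psi (g : ℝ → ℝ) (b c α u : ℝ) : ℝ :=
  u ^ ((α + 1 + b) / c - 1) * Real.exp ((1 / c) * Hf g u)

section Aux
variable {g : ℝ → ℝ} {b c : ℝ}

lemma gv_intable (hmono : MonotoneOn g (Icc 0 1)) {u : ℝ} (hu : 0 < u) (hu1 : u ≤ 1) :
    IntervalIntegrable (fun v => g v / v) volume u 1 := by
  have huIcc : uIcc u 1 = Icc u 1 := uIcc_of_le hu1
  have hgi : IntervalIntegrable g volume u 1 :=
    (hmono.mono (by rw [huIcc]; exact Icc_subset_Icc hu.le le_rfl)).intervalIntegrable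
  have : IntervalIntegrable (fun v => g v * v⁻¹) volume u 1 := by
    apply hgi.mul_continuousOn
    apply ContinuousOn.inv₀ continuousOn_id
    intro x hx
    rw [huIcc] at hx
    exact ne_of_gt (lt_of_lt_of_le hu hx.1)
  simpa [div_eq_mul_inv] using this

lemma Hf_nonneg (hmono : MonotoneOn g (Icc 0 1)) (hg0 : ∀ v ∈ Icc (0:ℝ) 1, 0 ≤ g v)
    {u : ℝ} (hu : 0 < u) (hu1 : u ≤ 1) : 0 ≤ Hf g u := by
  apply intervalIntegral.integral_nonneg hu1
  intro x hx
  have hx0 : 0 < x := lt_of_lt_of_le hu hx.1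
  exact div_nonneg (hg0 x ⟨hx0.le, hx.2⟩) hx0.le

lemma Hf_le (hmono : MonotoneOn g (Icc 0 1)) (hg1 : ∀ v ∈ Icc (0:ℝ) 1, g v ≤ 1)
    {u : ℝ} (hu : 0 < u) (hu1 : u ≤ 1) : Hf g u ≤ -Real.log u := by
  have h1 : (∫ v in u..1, (1:ℝ) / v) = -Real.log u := by
    rw [integral_one_div (by rw [uIcc_of_le hu1]; intro h; exact absurd h.1 (not_le.2 hu))]
    simp
  rw [← h1]
  apply intervalIntegral.integral_mono_on hu1 (gv_intable hmono hu hu1)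
  · exact intervalIntegrable_one_div (fun x hx => by
      rw [uIcc_of_le hu1] at hx; exact ne_of_gt (lt_of_lt_of_le hu hx.1)) continuousOn_id
  · intro x hx
    have hx0 : 0 < x := lt_of_lt_of_le hu hx.1
    have := hg1 x ⟨hx0.le, hx.2⟩
    gcongr


lemma Hf_continuousOn (hmono : MonotoneOn g (Icc 0 1)) :
    ContinuousOn (Hf g) (Ioc 0 1) := by
  intro u hu
  have h2 : (0:ℝ) < u / 2 := by linarith [hu.1]
  have hIcc : ContinuousOn (Hf g) (Icc (u/2) 1) := by
    have := intervalIntegral.continuousOn_primitive_interval_left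
      (f := fun v => g v / v) (a := u/2) (b := 1) (μ := volume) ?_
    · rwa [uIcc_of_le (by linarith [hu.2])] at this
    · rw [uIcc_of_le (by linarith [hu.2])]
      rw [← intervalIntegrable_iff_integrableOn_Icc_of_le (by linarith [hu.2])]
      exact gv_intable hmono h2 (by linarith [hu.2])
  have hmem : Icc (u/2) 1 ∈ nhdsWithin u (Ioc 0 1) := by
    apply Filter.mem_of_superset (Filter.inter_mem
      (mem_nhdsWithin_of_mem_nhds (isOpen_Ioi.mem_nhds (show u/2 < u by linarith [hu.1])))
      self_mem_nhdsWithin)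
    rintro x ⟨hx1, hx2⟩
    exact ⟨le_of_lt hx1, hx2.2⟩
  exact (hIcc u ⟨by linarith [hu.1], hu.2⟩).mono_of_mem_nhdsWithin hmem

lemma psi_continuousOn (hmono : MonotoneOn g (Icc 0 1)) (α : ℝ) :
    ContinuousOn (psi g b c α) (Ioc 0 1) := by
  apply ContinuousOn.mul
  · apply ContinuousOn.rpow_const continuousOn_id
    intro x hx; exact Or.inl (ne_of_gt hx.1)
  · exact (Real.continuous_exp.comp_continuousOn
      ((continuousOn_const.mul (Hf_continuousOn hmono))))

lemma psi_pos {α u : ℝ} (hu : 0 < u) : 0 < psi g b c α u :=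
  mul_pos (Real.rpow_pos_of_pos hu _) (Real.exp_pos _)

lemma psi_le (hmono : MonotoneOn g (Icc 0 1)) (hg1 : ∀ v ∈ Icc (0:ℝ) 1, g v ≤ 1)
    (hc : 0 < c) {α u : ℝ} (hu : 0 < u) (hu1 : u ≤ 1) :
    psi g b c α u ≤ u ^ ((α + b) / c - 1) := by
  have h1 : Real.exp ((1 / c) * Hf g u) ≤ u ^ (-(1/c)) := by
    rw [Real.rpow_def_of_pos hu]
    apply Real.exp_le_exp.2
    have := Hf_le hmono hg1 hu hu1
    calc (1/c) * Hf g u ≤ (1/c) * (-Real.log u) := by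
          apply mul_le_mul_of_nonneg_left this (by positivity)
      _ = Real.log u * (-(1/c)) := by ring
  calc psi g b c α u ≤ u ^ ((α + 1 + b) / c - 1) * u ^ (-(1/c)) := by
        apply mul_le_mul_of_nonneg_left h1 (Real.rpow_nonneg hu.le _)
    _ = u ^ ((α + b) / c - 1) := by
        rw [← Real.rpow_add hu]
        congr 1
        field_simp
        ring

lemma rpow_integrableOn_Ioo {r : ℝ} (hr : -1 < r) :
    IntegrableOn (fun u : ℝ => u ^ r) (Ioo 0 1) volume := by
  have := (intervalIntegral.intervalIntegrable_rpow' (a := 0) (b := 1) hr)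
  rw [intervalIntegrable_iff_integrableOn_Ioo_of_le zero_le_one] at this
  exact this

lemma psi_integrableOn (hmono : MonotoneOn g (Icc 0 1)) (hg1 : ∀ v ∈ Icc (0:ℝ) 1, g v ≤ 1)
    (hb : 0 < b) (hc : 0 < c) {α : ℝ} (hα : 0 ≤ α) :
    IntegrableOn (psi g b c α) (Ioo 0 1) volume := by
  have hexp : (-1:ℝ) < (α + b) / c - 1 := by
    have : 0 < (α + b) / c := div_pos (by linarith) hc
    linarith
  apply Integrable.mono' (rpow_integrableOn_Ioo hexp)
  · exact ((psi_continuousOn hmono α).mono Ioo_subset_Ioc_self).aestronglyMeasurable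
      measurableSet_Ioo
  · filter_upwards [ae_restrict_mem measurableSet_Ioo] with u hu
    rw [Real.norm_of_nonneg (psi_pos hu.1).le]
    exact psi_le hmono hg1 hc hu.1 hu.2.le

lemma integral_rpow_Ioo {r : ℝ} (hr : 0 < r) :
    ∫ u in Ioo (0:ℝ) 1, u ^ (r - 1) = 1 / r := by
  rw [← integral_Ioc_eq_integral_Ioo, ← intervalIntegral.integral_of_le zero_le_one]
  rw [integral_rpow (Or.inl (by linarith))]
  rw [Real.one_rpow, Real.zero_rpow (by linarith)]
  ring_nf

/-- J(α) ≤ c / (α + b) -/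
lemma J_le (hmono : MonotoneOn g (Icc 0 1)) (hg1 : ∀ v ∈ Icc (0:ℝ) 1, g v ≤ 1)
    (hb : 0 < b) (hc : 0 < c) {α : ℝ} (hα : 0 ≤ α) :
    (∫ u in Ioo (0:ℝ) 1, psi g b c α u) ≤ c / (α + b) := by
  have hr : 0 < (α + b) / c := div_pos (by linarith) hc
  have h1 : (∫ u in Ioo (0:ℝ) 1, psi g b c α u) ≤ ∫ u in Ioo (0:ℝ) 1, u ^ ((α+b)/c - 1) := by
    apply setIntegral_mono_on (psi_integrableOn hmono hg1 hb hc hα)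
      (rpow_integrableOn_Ioo (by linarith)) measurableSet_Ioo
    intro u hu
    exact psi_le hmono hg1 hc hu.1 hu.2.le
  rw [integral_rpow_Ioo hr] at h1
  calc (∫ u in Ioo (0:ℝ) 1, psi g b c α u) ≤ 1 / ((α+b)/c) := h1
    _ = c / (α + b) := by rw [one_div_div]

/-- strict antitonicity of J -/
lemma J_strict (hmono : MonotoneOn g (Icc 0 1)) (hg1 : ∀ v ∈ Icc (0:ℝ) 1, g v ≤ 1)
    (hb : 0 < b) (hc : 0 < c) {α α' : ℝ} (hα : 0 ≤ α) (h : α < α') :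
    (∫ u in Ioo (0:ℝ) 1, psi g b c α' u) < ∫ u in Ioo (0:ℝ) 1, psi g b c α u := by
  have hα' : (0:ℝ) ≤ α' := le_of_lt (lt_of_le_of_lt hα h)
  have hint := psi_integrableOn hmono hg1 hb hc hα
  have hint' := psi_integrableOn hmono hg1 hb hc hα'
  have key : 0 < ∫ u in Ioo (0:ℝ) 1, (psi g b c α u - psi g b c α' u) := by
    rw [setIntegral_pos_iff_support_of_nonneg_ae]
    · have : Ioo (0:ℝ) 1 ⊆ Function.support fun u => psi g b c α u - psi g b c α' u := by
        intro u hu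
        have hlt : psi g b c α' u < psi g b c α u := by
          unfold psi
          apply mul_lt_mul_of_pos_right _ (Real.exp_pos _)
          apply Real.rpow_lt_rpow_of_exponent_gt hu.1 hu.2
          have e : (α' + 1 + b) / c - (α + 1 + b) / c = (α' - α) / c := by ring
          have : 0 < (α' - α) / c := div_pos (by linarith) hc
          linarith
        simp [Function.mem_support, sub_ne_zero]
        exact ne_of_gt (by linarith)
      calc (0:ℝ≥0∞) < volume (Ioo (0:ℝ) 1) := by simp
        _ ≤ volume (Function.support (fun u => psi g b c α u - psi g b c α' u) ∩ Ioo 0 1) := by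
            apply measure_mono; intro x hx; exact ⟨this hx, hx⟩
    · filter_upwards [ae_restrict_mem measurableSet_Ioo] with u hu
      have : psi g b c α' u ≤ psi g b c α u := by
        unfold psi
        apply mul_le_mul_of_nonneg_right _ (Real.exp_pos _).le
        apply Real.rpow_le_rpow_of_exponent_ge hu.1 hu.2.le
        have e : (α' + 1 + b) / c - (α + 1 + b) / c = (α' - α) / c := by ring
        have : 0 ≤ (α' - α) / c := div_nonneg (by linarith) hc.le
        linarith
      simpa using sub_nonneg.2 this
    · exact hint.sub hint'
  have := integral_sub hint hint'
  rw [this] at key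
  linarith

lemma J_continuousOn (hmono : MonotoneOn g (Icc 0 1)) (hg1 : ∀ v ∈ Icc (0:ℝ) 1, g v ≤ 1)
    (hb : 0 < b) (hc : 0 < c) (A : ℝ) :
    ContinuousOn (fun α => ∫ u in Ioo (0:ℝ) 1, psi g b c α u) (Icc 0 A) := by
  intro α₀ hα₀
  apply continuousWithinAt_of_dominated (bound := psi g b c 0)
  · filter_upwards with α
    exact ((psi_continuousOn hmono α).mono Ioo_subset_Ioc_self).aestronglyMeasurable
      measurableSet_Ioo
  · filter_upwards [self_mem_nhdsWithin] with α hα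
    filter_upwards [ae_restrict_mem measurableSet_Ioo] with u hu
    rw [Real.norm_of_nonneg (psi_pos hu.1).le]
    unfold psi
    apply mul_le_mul_of_nonneg_right _ (Real.exp_pos _).le
    apply Real.rpow_le_rpow_of_exponent_ge hu.1 hu.2.le
    have e : (α + 1 + b) / c - (0 + 1 + b) / c = α / c := by ring
    have : 0 ≤ α / c := div_nonneg hα.1 hc.le
    linarith
  · exact psi_integrableOn hmono hg1 hb hc le_rfl
  · filter_upwards [ae_restrict_mem measurableSet_Ioo] with u hu
    have heq : (fun α => psi g b c α u)
        = fun α => Real.exp (Real.log u * ((α + 1 + b) / c - 1)) *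
            Real.exp ((1 / c) * Hf g u) := by
      funext α; unfold psi; rw [Real.rpow_def_of_pos hu.1]
    rw [heq]
    apply Continuous.continuousWithinAt
    apply Continuous.mul _ continuous_const
    apply Real.continuous_exp.comp
    fun_prop

lemma subst_lemma (hmono : MonotoneOn g (Icc 0 1)) (hc : 0 < c) (α : ℝ) {T : ℝ} (hT : 0 ≤ T) :
    (∫ t in (0:ℝ)..T, Real.exp (-(α + 1 + b) * t + (1 / c) * Hf g (Real.exp (-c * t))))
      = (1 / c) * ∫ u in Real.exp (-c * T)..1, psi g b c α u := by
  set f : ℝ → ℝ := fun t => Real.exp (-c * t) with hf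
  set f' : ℝ → ℝ := fun t => -c * Real.exp (-c * t) with hf'
  have hderiv : ∀ x ∈ uIcc (0:ℝ) T, HasDerivAt f (f' x) x := by
    intro x _
    have h1 : HasDerivAt (fun t : ℝ => -c * t) (-c) x := by
      simpa using (hasDerivAt_id x).const_mul (-c)
    have h2 := h1.exp
    simpa [hf, hf', mul_comm] using h2
  have hcont' : ContinuousOn f' (uIcc (0:ℝ) T) := by fun_prop
  have himg : f '' uIcc (0:ℝ) T ⊆ Ioc 0 1 := by
    rintro y ⟨x, hx, rfl⟩
    rw [uIcc_of_le hT] at hx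
    constructor
    · exact Real.exp_pos _
    · rw [Real.exp_le_one_iff]
      have := hx.1
      nlinarith
  have hgc : ContinuousOn (psi g b c α) (f '' uIcc (0:ℝ) T) :=
    (psi_continuousOn hmono α).mono himg
  have key := integral_comp_smul_deriv' hderiv hcont' hgc
  have e1 : ∀ x, f' x • (psi g b c α ∘ f) x
      = (-c) * Real.exp (-(α + 1 + b) * x + (1 / c) * Hf g (f x)) := by
    intro x
    have hfx : (0:ℝ) < f x := Real.exp_pos _
    simp only [Function.comp, smul_eq_mul, hf']
    unfold psi
    rw [Real.rpow_def_of_pos hfx, Real.log_exp]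
    have hE : -c * x + (-c * x * ((α + 1 + b) / c - 1) + 1 / c * Hf g (f x))
        = -(α + 1 + b) * x + 1 / c * Hf g (f x) := by
      have hcne : c ≠ 0 := ne_of_gt hc
      field_simp
      ring
    rw [← hE]
    conv_rhs => rw [Real.exp_add]
    rw [mul_assoc, ← Real.exp_add]
  have lhs_eq : (∫ x in (0:ℝ)..T, f' x • (psi g b c α ∘ f) x)
      = (-c) * ∫ t in (0:ℝ)..T,
          Real.exp (-(α + 1 + b) * t + (1 / c) * Hf g (Real.exp (-c * t))) := by
    rw [← intervalIntegral.integral_const_mul]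
    apply intervalIntegral.integral_congr
    intro x _
    exact e1 x
  have rhs_eq : (∫ u in (f 0)..(f T), psi g b c α u)
      = - ∫ u in Real.exp (-c * T)..1, psi g b c α u := by
    have h0 : f 0 = 1 := by simp [hf]
    rw [h0]
    exact intervalIntegral.integral_symm _ _
  rw [lhs_eq, rhs_eq] at key
  have hcne : c ≠ 0 := ne_of_gt hc
  field_simp at key ⊢
  linarith [key]

lemma expS_integrableOn (hmono : MonotoneOn g (Icc 0 1)) (hg1 : ∀ v ∈ Icc (0:ℝ) 1, g v ≤ 1)
    (hb : 0 < b) (hc : 0 < c) {α : ℝ} (hα : 0 ≤ α) :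
    IntegrableOn (fun t => Real.exp (-(α + 1 + b) * t + (1 / c) * Hf g (Real.exp (-c * t))))
      (Ioi 0) volume := by
  apply Integrable.mono' (exp_neg_integrableOn_Ioi 0 (show 0 < α + b by linarith))
  · apply ContinuousOn.aestronglyMeasurable _ measurableSet_Ioi
    apply Real.continuous_exp.comp_continuousOn
    apply ContinuousOn.add
    · fun_prop
    · apply ContinuousOn.mul continuousOn_const
      apply (Hf_continuousOn hmono).comp
      · fun_prop
      · intro t ht
        refine ⟨Real.exp_pos _, Real.exp_le_one_iff.2 ?_⟩
        have h0 : (0:ℝ) < t := ht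
        nlinarith
  · filter_upwards [ae_restrict_mem measurableSet_Ioi] with t ht
    have h0 : (0:ℝ) < t := ht
    rw [Real.norm_of_nonneg (Real.exp_pos _).le]
    apply Real.exp_le_exp.2
    have hu1 : Real.exp (-c * t) ≤ 1 := Real.exp_le_one_iff.2 (by nlinarith)
    have hH := Hf_le hmono hg1 (Real.exp_pos (-c * t)) hu1
    rw [Real.log_exp] at hH
    have h2 : (1 / c) * Hf g (Real.exp (-c * t)) ≤ t := by
      have h3 := mul_le_mul_of_nonneg_left hH (le_of_lt (one_div_pos.2 hc))
      calc (1 / c) * Hf g (Real.exp (-c * t)) ≤ (1 / c) * -(-c * t) := h3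
        _ = t := by field_simp
    nlinarith

lemma I_eq_J (hmono : MonotoneOn g (Icc 0 1)) (hg1 : ∀ v ∈ Icc (0:ℝ) 1, g v ≤ 1)
    (hb : 0 < b) (hc : 0 < c) {α : ℝ} (hα : 0 ≤ α) :
    (∫ t in Ioi (0:ℝ), Real.exp (-(α + 1 + b) * t + (1 / c) * Hf g (Real.exp (-c * t))))
      = (1 / c) * ∫ u in Ioo (0:ℝ) 1, psi g b c α u := by
  have hIint := expS_integrableOn hmono hg1 hb hc hα
  have h1 : Tendsto (fun T : ℝ => ∫ t in (0:ℝ)..T,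
      Real.exp (-(α + 1 + b) * t + (1 / c) * Hf g (Real.exp (-c * t)))) atTop
      (𝓝 (∫ t in Ioi (0:ℝ),
        Real.exp (-(α + 1 + b) * t + (1 / c) * Hf g (Real.exp (-c * t))))) :=
    intervalIntegral_tendsto_integral_Ioi 0 hIint tendsto_id
  have hexp0 : Filter.Tendsto (fun T : ℝ => Real.exp (-c * T)) Filter.atTop (𝓝 0) := by
    apply Real.tendsto_exp_atBot.comp
    exact (Filter.tendsto_const_mul_atBot_of_neg (by linarith)).2 Filter.tendsto_id
  have hcov : AECover (volume.restrict (Ioc (0:ℝ) 1)) Filter.atTop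
      (fun T : ℝ => Ioi (Real.exp (-c * T))) := by
    refine ⟨?_, fun _ => measurableSet_Ioi⟩
    filter_upwards [ae_restrict_mem measurableSet_Ioc] with x hx
    exact hexp0.eventually_lt_const hx.1
  have hJoc : IntegrableOn (psi g b c α) (Ioc 0 1) volume := by
    rw [integrableOn_Ioc_iff_integrableOn_Ioo]
    exact psi_integrableOn hmono hg1 hb hc hα
  have h2 := hcov.integral_tendsto_of_countably_generated hJoc
  have h3 : Tendsto (fun T : ℝ => ∫ u in Real.exp (-c * T)..1, psi g b c α u) Filter.atTop
      (𝓝 (∫ u in Ioc (0:ℝ) 1, psi g b c α u)) := by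
    apply h2.congr'
    filter_upwards [Filter.eventually_ge_atTop (0:ℝ)] with T hT
    have ha : Real.exp (-c * T) ≤ 1 := Real.exp_le_one_iff.2 (by nlinarith)
    have hseteq : Ioi (Real.exp (-c * T)) ∩ Ioc (0:ℝ) 1 = Ioc (Real.exp (-c * T)) 1 := by
      ext x
      simp only [mem_inter_iff, mem_Ioi, mem_Ioc]
      constructor
      · rintro ⟨hx1, _, hx3⟩; exact ⟨hx1, hx3⟩
      · rintro ⟨hx1, hx2⟩; exact ⟨hx1, lt_trans (Real.exp_pos _) hx1, hx2⟩
    rw [Measure.restrict_restrict measurableSet_Ioi, hseteq,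
      intervalIntegral.integral_of_le ha]
  have h4 : Tendsto (fun T : ℝ => ∫ t in (0:ℝ)..T,
      Real.exp (-(α + 1 + b) * t + (1 / c) * Hf g (Real.exp (-c * t)))) atTop
      (𝓝 ((1 / c) * ∫ u in Ioc (0:ℝ) 1, psi g b c α u)) := by
    apply Filter.Tendsto.congr' _ (h3.const_mul (1 / c))
    filter_upwards [Filter.eventually_ge_atTop (0:ℝ)] with T hT
    exact (subst_lemma hmono hc α hT).symm
  have := tendsto_nhds_unique h1 h4
  rw [this, integral_Ioc_eq_integral_Ioo]

end Aux

/-- With S(t) = exp{-(1+b)t + (1/c)∫_{e^{-ct}}^1 g_ε(v)/v dv}, a Malthusian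
parameter α > 0 with E(ε)∫_0^∞ e^{-αt}S(t)dt = 1 exists (supercriticality) if and only if
(E(ε)/c) ∫_0^1 u^{(1+b)/c - 1} exp{(1/c) ∫_u^1 g_ε(v)/v dv} du > 1. -/
theorem supercriticality_iff {Ω : Type*} [MeasurableSpace Ω] (μ : Measure Ω)
    [IsProbabilityMeasure μ] (b c : ℝ) (hb : 0 < b) (hc : 0 < c)
    (ε : Ω → ℕ) (hεmeas : Measurable ε) (hεpos : ∀ ω, 0 < ε ω)
    (hεint : Integrable (fun ω => (ε ω : ℝ)) μ)
    (g : ℝ → ℝ) (hg : ∀ v : ℝ, g v = ∫ ω, v ^ (ε ω) ∂μ)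
    (S : ℝ → ℝ)
    (hS : ∀ t : ℝ, S t =
      Real.exp (-(1 + b) * t + (1 / c) * ∫ v in Real.exp (-c * t)..1, g v / v)) :
    (∃ α : ℝ, 0 < α ∧
        (∫ ω, (ε ω : ℝ) ∂μ) * ∫ t in Set.Ioi (0:ℝ), Real.exp (-α * t) * S t = 1) ↔
    ((∫ ω, (ε ω : ℝ) ∂μ) / c) * ∫ u in Set.Ioo (0:ℝ) 1,
        u ^ ((1 + b) / c - 1) * Real.exp ((1 / c) * ∫ v in u..1, g v / v) > 1 := by
  set m := ∫ ω, (ε ω : ℝ) ∂μ with hm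
  -- basic facts about g
  have hInt : ∀ v ∈ Icc (0:ℝ) 1, Integrable (fun ω => v ^ (ε ω)) μ := by
    intro v hv
    have hmeas : Measurable fun ω => v ^ (ε ω) := by
      exact Measurable.pow measurable_const hεmeas
    apply Integrable.mono' (integrable_const (1:ℝ)) hmeas.aestronglyMeasurable
    filter_upwards with ω
    rw [Real.norm_eq_abs, abs_pow]
    apply pow_le_one₀ (abs_nonneg v)
    rw [abs_of_nonneg hv.1]; exact hv.2
  have hmono : MonotoneOn g (Icc 0 1) := by
    intro x hx y hy hxy
    rw [hg, hg]
    apply integral_mono (hInt x hx) (hInt y hy)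
    intro ω
    exact pow_le_pow_left₀ hx.1 hxy _
  have hg0 : ∀ v ∈ Icc (0:ℝ) 1, 0 ≤ g v := by
    intro v hv
    rw [hg]
    exact integral_nonneg fun ω => pow_nonneg hv.1 _
  have hg1 : ∀ v ∈ Icc (0:ℝ) 1, g v ≤ 1 := by
    intro v hv
    rw [hg]
    calc (∫ ω, v ^ (ε ω) ∂μ) ≤ ∫ _, (1:ℝ) ∂μ := by
          apply integral_mono (hInt v hv) (integrable_const 1)
          intro ω
          exact pow_le_one₀ hv.1 hv.2
      _ = 1 := by simp
  have hm1 : (1:ℝ) ≤ m := by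
    rw [hm]
    calc (1:ℝ) = ∫ _, (1:ℝ) ∂μ := by simp
      _ ≤ ∫ ω, (ε ω : ℝ) ∂μ := by
          apply integral_mono (integrable_const 1) hεint
          intro ω
          show (1:ℝ) ≤ (ε ω : ℝ)
          exact_mod_cast hεpos ω
  have hm0 : (0:ℝ) < m := lt_of_lt_of_le zero_lt_one hm1
  -- rewrite the time-integral
  have hI : ∀ α : ℝ, (∫ t in Ioi (0:ℝ), Real.exp (-α * t) * S t)
      = ∫ t in Ioi (0:ℝ), Real.exp (-(α + 1 + b) * t + (1 / c) * Hf g (Real.exp (-c * t))) := by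
    intro α
    congr 1
    funext t
    rw [hS t, ← Real.exp_add]
    apply congrArg Real.exp
    simp only [Hf]
    ring
  -- rewrite the u-integral
  have hJ0 : (∫ u in Ioo (0:ℝ) 1,
        u ^ ((1 + b) / c - 1) * Real.exp ((1 / c) * ∫ v in u..1, g v / v))
      = ∫ u in Ioo (0:ℝ) 1, psi g b c 0 u := by
    congr 1
    funext u
    simp only [psi, Hf]
    norm_num
  rw [hJ0]
  constructor
  · rintro ⟨α, hα, heq⟩
    rw [hI α, I_eq_J hmono hg1 hb hc hα.le] at heq
    have hstrict := J_strict hmono hg1 hb hc le_rfl hα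
    have hpos : (0:ℝ) < m / c := div_pos hm0 hc
    have h1 : m / c * ∫ u in Ioo (0:ℝ) 1, psi g b c α u = 1 := by
      linear_combination heq
    calc (1:ℝ) = m / c * ∫ u in Ioo (0:ℝ) 1, psi g b c α u := h1.symm
      _ < m / c * ∫ u in Ioo (0:ℝ) 1, psi g b c 0 u :=
        mul_lt_mul_of_pos_left hstrict hpos
  · intro h
    set F : ℝ → ℝ := fun α => m / c * ∫ u in Ioo (0:ℝ) 1, psi g b c α u with hF
    have hFc : ContinuousOn F (Icc 0 m) :=
      continuousOn_const.mul (J_continuousOn hmono hg1 hb hc m)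
    have hFm : F m < 1 := by
      have hJle := J_le hmono hg1 hb hc (le_of_lt hm0)
      have : F m ≤ m / c * (c / (m + b)) := by
        apply mul_le_mul_of_nonneg_left hJle (div_pos hm0 hc).le
      have he : m / c * (c / (m + b)) = m / (m + b) := by
        field_simp
      rw [he] at this
      have : m / (m + b) < 1 := (div_lt_one (by linarith)).2 (by linarith)
      linarith [‹F m ≤ m / (m + b)›]
    have hF0 : 1 < F 0 := h
    have hIVT := intermediate_value_Ioo' (le_of_lt hm0) hFc
    have h1mem : (1:ℝ) ∈ Ioo (F m) (F 0) := ⟨hFm, hF0⟩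
    obtain ⟨α, hαmem, hFα⟩ := hIVT h1mem
    refine ⟨α, hαmem.1, ?_⟩
    rw [hI α, I_eq_J hmono hg1 hb hc hαmem.1.le]
    have : F α = 1 := hFα
    rw [hF] at this
    simp only at this
    linear_combination this
end

section
/- The linear ODE [1 + b - G(t)] h(t) + c t h'(t) = 1 with initial condition h(0) = 1/(1+b), where G : [0,1] → ℝ is continuous with G(0) = 0 and b, c > 0, has the solution h(t) = (1/c) t^{-(1+b)/c} ∫_0^t u^{(1+b)/c - 1} exp{ (1/c) ∫_u^t G(s)/s ds } du on (0,1], extended continuously to 0. -/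
/-!
Write `p = 1 + b`, `Ψ t = ∫ s in 1..t, G s / s`, `E t = t ^ (-p/c) * exp (Ψ t / c)` and
`k u = u ^ (p/c - 1) * exp (-Ψ u / c)`. Then `E` is an integrating factor, `c t E' = (G - p) E`,
and `t E(t) k(t) = 1`, so `h = E · ∫₀ᵗ k / c` solves the ODE by the product rule.

Near `0`, `|G| ≤ ε` on `(0, t]` gives `|Ψ t - Ψ u| ≤ ε log (t/u)`, which squeezes `E(t) k(u)`
between `u ^ ((p ± ε)/c - 1) / t ^ ((p ± ε)/c)`. Integrating over `(0, t]` yields both the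
integrability of `k` at `0` and `1/(p + ε) ≤ h t ≤ 1/(p - ε)`, hence `h t → 1/p`.
-/

open MeasureTheory intervalIntegral Filter Set Topology Real

theorem hasDerivWithinAt_integral_of_continuousOn_Ioc {f : ℝ → ℝ} {p q a t : ℝ}
    (hf : ContinuousOn f (Ioc p q)) (hfi : IntervalIntegrable f volume a t) (ht : t ∈ Ioc p q) :
    HasDerivWithinAt (fun x => ∫ u in a..x, f u) (f t) (Ioc p q) t := by
  rcases ht.2.lt_or_eq with htq | rfl
  · have hnhds : Ioo p q ∈ 𝓝 t := Ioo_mem_nhds ht.1 htq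
    have hf' := hf.mono Ioo_subset_Ioc_self
    exact (integral_hasDerivAt_right hfi (hf'.stronglyMeasurableAtFilter isOpen_Ioo t ⟨ht.1, htq⟩)
      (hf'.continuousAt hnhds)).hasDerivWithinAt
  · have hleft : Ioc p t ∈ 𝓝[≤] t := Ioc_mem_nhdsLE ht.1
    exact (integral_hasDerivWithinAt_right hfi
      ⟨_, hleft, hf.aestronglyMeasurable measurableSet_Ioc⟩
      ((hf t ht).mono_of_mem_nhdsWithin hleft)).mono Ioc_subset_Iic_self

theorem abs_integral_div_le_mul_log {f : ℝ → ℝ} {ε u v : ℝ} (hu : 0 < u) (huv : u ≤ v)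
    (hf : ∀ s ∈ Ioc u v, |f s| ≤ ε) : |∫ s in u..v, f s / s| ≤ ε * (log v - log u) := by
  have hzero : (0 : ℝ) ∉ uIcc u v := by
    rw [uIcc_of_le huv]; exact fun h => hu.not_ge h.1
  have hint : IntervalIntegrable (fun s => ε * s⁻¹) volume u v :=
    (intervalIntegrable_inv (fun s hs => ne_of_mem_of_not_mem hs hzero)
      continuousOn_id).const_mul ε
  calc |∫ s in u..v, f s / s| = ‖∫ s in u..v, f s / s‖ := (norm_eq_abs _).symm
    _ ≤ ∫ s in u..v, ε * s⁻¹ := by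
        refine norm_integral_le_of_norm_le huv (ae_of_all _ fun s hs => ?_) hint
        have hs0 : 0 < s := hu.trans hs.1
        rw [norm_div, norm_of_nonneg hs0.le, ← div_eq_mul_inv]
        exact div_le_div_of_nonneg_right (hf s hs) hs0.le
    _ = ε * (log v - log u) := by
        rw [intervalIntegral.integral_const_mul, integral_inv hzero,
          log_div (hu.trans_le huv).ne' hu.ne']

theorem rpow_mul_exp_mem_Icc {p c ε x u t : ℝ} (hc : 0 < c) (hu : 0 < u) (ht : 0 < t)
    (hx : |x| ≤ ε * (log t - log u)) :
    t ^ (-p / c) * (u ^ (p / c - 1) * exp (x / c)) ∈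
      Icc (u ^ ((p + ε) / c - 1) / t ^ ((p + ε) / c))
        (u ^ ((p - ε) / c - 1) / t ^ ((p - ε) / c)) := by
  have hpow : ∀ e : ℝ, u ^ (e - 1) / t ^ e = exp ((e - 1) * log u - e * log t) := fun e => by
    rw [rpow_def_of_pos hu, rpow_def_of_pos ht, ← exp_sub]; ring_nf
  have hlhs : t ^ (-p / c) * (u ^ (p / c - 1) * exp (x / c)) =
      exp ((p / c - 1) * log u - p / c * log t + x / c) := by
    rw [rpow_def_of_pos hu, rpow_def_of_pos ht, ← exp_add, ← exp_add]; ring_nf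
  obtain ⟨hlo, hhi⟩ := abs_le.1 hx
  rw [hlhs, hpow, hpow]
  constructor <;> refine exp_le_exp.2 (sub_nonneg.1 ?_)
  · have hgap : (p / c - 1) * log u - p / c * log t + x / c -
        (((p + ε) / c - 1) * log u - (p + ε) / c * log t) =
        (x + ε * (log t - log u)) / c := by ring
    exact hgap ▸ div_nonneg (by linarith) hc.le
  · have hgap : ((p - ε) / c - 1) * log u - (p - ε) / c * log t -
        ((p / c - 1) * log u - p / c * log t + x / c) =
        (ε * (log t - log u) - x) / c := by ring
    exact hgap ▸ div_nonneg (by linarith) hc.le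

theorem integral_rpow_sub_one_div_rpow {q t : ℝ} (hq : 0 < q) (ht : 0 < t) :
    ∫ u in (0 : ℝ)..t, u ^ (q - 1) / t ^ q = 1 / q := by
  rw [intervalIntegral.integral_div, integral_rpow (Or.inl (by linarith)), sub_add_cancel,
    zero_rpow hq.ne', sub_zero]
  field_simp [(rpow_pos_of_pos ht q).ne']

theorem eventually_forall_Ioc_of_eventually_nhdsGT {α : Type*} [TopologicalSpace α]
    [LinearOrder α] [OrderTopology α] [NoMaxOrder α] [DenselyOrdered α] {P : α → Prop} {a : α}
    (h : ∀ᶠ s in 𝓝[>] a, P s) : ∀ᶠ t in 𝓝[>] a, ∀ s ∈ Ioc a t, P s := by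
  obtain ⟨δ, hδ, hsub⟩ := mem_nhdsGT_iff_exists_Ioc_subset.1 h
  filter_upwards [Ioo_mem_nhdsGT hδ] with t ht s hs using hsub ⟨hs.1, hs.2.trans ht.2.le⟩

theorem tendsto_of_eventually_mem_Icc {α β γ : Type*} [TopologicalSpace β] [LinearOrder β]
    [OrderTopology β] {f : α → β} {l : Filter α} {l' : Filter γ} [l'.NeBot] {lo hi : γ → β}
    {L : β} (hlo : Tendsto lo l' (𝓝 L)) (hhi : Tendsto hi l' (𝓝 L))
    (h : ∀ᶠ ε in l', ∀ᶠ x in l, f x ∈ Icc (lo ε) (hi ε)) : Tendsto f l (𝓝 L) := by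
  refine tendsto_order.2 ⟨fun a ha => ?_, fun a ha => ?_⟩
  · obtain ⟨ε, hε, haε⟩ := (h.and (hlo.eventually (lt_mem_nhds ha))).exists
    exact hε.mono fun x hx => haε.trans_le hx.1
  · obtain ⟨ε, hε, haε⟩ := (h.and (hhi.eventually (gt_mem_nhds ha))).exists
    exact hε.mono fun x hx => hx.2.trans_lt haε

namespace SingularLinearODE

noncomputable def logPrimitive (G : ℝ → ℝ) (t : ℝ) : ℝ := ∫ s in (1 : ℝ)..t, G s / s

noncomputable def integratingFactor (p c : ℝ) (G : ℝ → ℝ) (t : ℝ) : ℝ :=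
  t ^ (-p / c) * exp (logPrimitive G t / c)

noncomputable def kernel (p c : ℝ) (G : ℝ → ℝ) (u : ℝ) : ℝ :=
  u ^ (p / c - 1) * exp (-logPrimitive G u / c)

noncomputable def solution (p c : ℝ) (G : ℝ → ℝ) (t : ℝ) : ℝ :=
  1 / c * integratingFactor p c G t * ∫ u in (0 : ℝ)..t, kernel p c G u

variable {G : ℝ → ℝ} {p c ε t : ℝ}

theorem intervalIntegrable_div_id (hG : ContinuousOn G (Ioc 0 1)) {u v : ℝ}
    (hu : u ∈ Ioc (0 : ℝ) 1) (hv : v ∈ Ioc (0 : ℝ) 1) :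
    IntervalIntegrable (fun s => G s / s) volume u v :=
  ((hG.div continuousOn_id fun _ hs => hs.1.ne').mono
    (ordConnected_Ioc.uIcc_subset hu hv)).intervalIntegrable

theorem hasDerivWithinAt_logPrimitive (hG : ContinuousOn G (Ioc 0 1)) (ht : t ∈ Ioc (0 : ℝ) 1) :
    HasDerivWithinAt (logPrimitive G) (G t / t) (Ioc 0 1) t :=
  hasDerivWithinAt_integral_of_continuousOn_Ioc (hG.div continuousOn_id fun _ hs => hs.1.ne')
    (intervalIntegrable_div_id hG ⟨one_pos, le_rfl⟩ ht) ht

theorem logPrimitive_sub (hG : ContinuousOn G (Ioc 0 1)) {u : ℝ} (hu : u ∈ Ioc (0 : ℝ) 1)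
    (ht : t ∈ Ioc (0 : ℝ) 1) :
    logPrimitive G t - logPrimitive G u = ∫ s in u..t, G s / s :=
  integral_interval_sub_left (intervalIntegrable_div_id hG ⟨one_pos, le_rfl⟩ ht)
    (intervalIntegrable_div_id hG ⟨one_pos, le_rfl⟩ hu)

theorem continuousOn_logPrimitive (hG : ContinuousOn G (Ioc 0 1)) :
    ContinuousOn (logPrimitive G) (Ioc 0 1) :=
  fun _ ht => (hasDerivWithinAt_logPrimitive hG ht).continuousWithinAt

theorem continuousOn_kernel (hG : ContinuousOn G (Ioc 0 1)) :
    ContinuousOn (kernel p c G) (Ioc 0 1) :=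
  (continuousOn_id.rpow_const fun _ hu => Or.inl hu.1.ne').mul
    ((continuousOn_logPrimitive hG).neg.div_const c).rexp

theorem hasDerivWithinAt_integratingFactor (hG : ContinuousOn G (Ioc 0 1))
    (ht : t ∈ Ioc (0 : ℝ) 1) :
    HasDerivWithinAt (integratingFactor p c G)
      ((G t - p) / (c * t) * integratingFactor p c G t) (Ioc 0 1) t := by
  have hpow : HasDerivWithinAt (fun x => x ^ (-p / c)) (-p / c * t ^ (-p / c - 1)) (Ioc 0 1) t :=
    (hasDerivAt_rpow_const (Or.inl ht.1.ne')).hasDerivWithinAt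
  have hexp : HasDerivWithinAt (fun x => exp (logPrimitive G x / c))
      (exp (logPrimitive G t / c) * (G t / t / c)) (Ioc 0 1) t :=
    ((hasDerivWithinAt_logPrimitive hG ht).div_const c).exp
  refine (hpow.mul hexp).congr_deriv ?_
  rw [integratingFactor, rpow_sub_one ht.1.ne']
  field_simp
  ring

theorem self_mul_integratingFactor_mul_kernel (ht : 0 < t) :
    t * (integratingFactor p c G t * kernel p c G t) = 1 := by
  rw [integratingFactor, kernel, neg_div c (logPrimitive G t), exp_neg]
  calc _ = t * (t ^ (-p / c) * t ^ (p / c - 1)) *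
        (exp (logPrimitive G t / c) * (exp (logPrimitive G t / c))⁻¹) := by ring
    _ = 1 := by
      rw [← rpow_add ht, show -p / c + (p / c - 1) = -1 by ring, rpow_neg_one,
        mul_inv_cancel₀ ht.ne', mul_inv_cancel₀ (exp_pos _).ne', one_mul]

theorem solution_ode (hG : ContinuousOn G (Ioc 0 1))
    (hk : IntervalIntegrable (kernel p c G) volume 0 1) (hc : 0 < c) (ht : t ∈ Ioc (0 : ℝ) 1) :
    (p - G t) * solution p c G t + c * t * derivWithin (solution p c G) (Ioc 0 1) t = 1 := by
  have hint : HasDerivWithinAt (fun x => ∫ u in (0 : ℝ)..x, kernel p c G u) (kernel p c G t)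
      (Ioc 0 1) t :=
    hasDerivWithinAt_integral_of_continuousOn_Ioc (continuousOn_kernel hG)
      (hk.mono_set <| by
        rw [uIcc_of_le ht.1.le, uIcc_of_le zero_le_one]; exact Icc_subset_Icc_right ht.2) ht
  have hsol : HasDerivWithinAt (solution p c G) _ (Ioc 0 1) t :=
    ((hasDerivWithinAt_integratingFactor hG ht).const_mul (1 / c)).mul hint
  rw [hsol.derivWithin (uniqueDiffOn_Ioc 0 1 t ht), solution]
  field_simp [ht.1.ne']
  linear_combination c * self_mul_integratingFactor_mul_kernel (p := p) (G := G) ht.1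

theorem integratingFactor_mul_kernel_mem_Icc (hG : ContinuousOn G (Ioc 0 1)) (hc : 0 < c)
    {u : ℝ} (hu : u ∈ Ioc 0 t) (ht : t ∈ Ioc (0 : ℝ) 1) (hGε : ∀ s ∈ Ioc 0 t, |G s| ≤ ε) :
    integratingFactor p c G t * kernel p c G u ∈
      Icc (u ^ ((p + ε) / c - 1) / t ^ ((p + ε) / c))
        (u ^ ((p - ε) / c - 1) / t ^ ((p - ε) / c)) := by
  have hfactor : integratingFactor p c G t * kernel p c G u =
      t ^ (-p / c) * (u ^ (p / c - 1) * exp ((logPrimitive G t - logPrimitive G u) / c)) := by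
    rw [integratingFactor, kernel, sub_div, exp_sub, neg_div c (logPrimitive G u), exp_neg]
    ring
  rw [hfactor]
  refine rpow_mul_exp_mem_Icc hc hu.1 ht.1 ?_
  rw [logPrimitive_sub hG ⟨hu.1, hu.2.trans ht.2⟩ ht]
  exact abs_integral_div_le_mul_log hu.1 hu.2 fun s hs => hGε s ⟨hu.1.trans hs.1, hs.2⟩

theorem intervalIntegrable_kernel_and_solution_mem_Icc (hG : ContinuousOn G (Ioc 0 1))
    (hc : 0 < c) (hεp : ε < p) (ht : t ∈ Ioc (0 : ℝ) 1) (hGε : ∀ s ∈ Ioc 0 t, |G s| ≤ ε) :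
    IntervalIntegrable (kernel p c G) volume 0 t ∧
      solution p c G t ∈ Icc (1 / (p + ε)) (1 / (p - ε)) := by
  have hε : 0 ≤ ε := (abs_nonneg _).trans (hGε t ⟨ht.1, le_rfl⟩)
  have hq_add : 0 < (p + ε) / c := by apply div_pos <;> linarith
  have hq_sub : 0 < (p - ε) / c := by apply div_pos <;> linarith
  set E := integratingFactor p c G t
  have hE : 0 < E := mul_pos (rpow_pos_of_pos ht.1 _) (exp_pos _)
  have hbound := fun u (hu : u ∈ Ioc 0 t) =>
    integratingFactor_mul_kernel_mem_Icc (p := p) hG hc hu ht hGε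
  have hpow_int : ∀ q : ℝ, 0 < q → IntervalIntegrable (fun u => u ^ (q - 1) / t ^ q) volume 0 t :=
    fun q hq => (intervalIntegrable_rpow' (by linarith)).div_const _
  have hEk : IntervalIntegrable (fun u => E * kernel p c G u) volume 0 t := by
    rw [intervalIntegrable_iff_integrableOn_Ioc_of_le ht.1.le]
    refine (hpow_int _ hq_sub).1.mono'
      ((((continuousOn_kernel hG).mono (Ioc_subset_Ioc_right ht.2)).const_smul E)
        |>.aestronglyMeasurable measurableSet_Ioc)
      (ae_restrict_of_forall_mem measurableSet_Ioc fun u hu => ?_)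
    obtain ⟨hlo, hhi⟩ := hbound u hu
    rw [norm_of_nonneg ((div_nonneg (rpow_nonneg hu.1.le _) (rpow_nonneg ht.1.le _)).trans hlo)]
    exact hhi
  have hsol : solution p c G t = 1 / c * ∫ u in (0 : ℝ)..t, E * kernel p c G u := by
    rw [solution, intervalIntegral.integral_const_mul]; ring
  refine ⟨by simpa [hE.ne'] using hEk.const_mul E⁻¹, ?_, ?_⟩ <;> rw [hsol]
  · calc 1 / (p + ε)
        = 1 / c * ∫ u in (0 : ℝ)..t, u ^ ((p + ε) / c - 1) / t ^ ((p + ε) / c) := by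
          rw [integral_rpow_sub_one_div_rpow hq_add ht.1]; field_simp
      _ ≤ 1 / c * ∫ u in (0 : ℝ)..t, E * kernel p c G u := by
          gcongr
          exact integral_mono_on_of_le_Ioo ht.1.le (hpow_int _ hq_add) hEk
            fun u hu => (hbound u (Ioo_subset_Ioc_self hu)).1
  · calc 1 / c * ∫ u in (0 : ℝ)..t, E * kernel p c G u
        ≤ 1 / c * ∫ u in (0 : ℝ)..t, u ^ ((p - ε) / c - 1) / t ^ ((p - ε) / c) := by
          gcongr
          exact integral_mono_on_of_le_Ioo ht.1.le hEk (hpow_int _ hq_sub)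
            fun u hu => (hbound u (Ioo_subset_Ioc_self hu)).2
      _ = 1 / (p - ε) := by
          rw [integral_rpow_sub_one_div_rpow hq_sub ht.1]; field_simp

theorem eventually_forall_Ioc_abs_le (hG0 : Tendsto G (𝓝[>] 0) (𝓝 0)) (hε : 0 < ε) :
    ∀ᶠ t in 𝓝[>] 0, ∀ s ∈ Ioc 0 t, |G s| ≤ ε :=
  eventually_forall_Ioc_of_eventually_nhdsGT
    ((hG0.eventually (Icc_mem_nhds (neg_lt_zero.2 hε) hε)).mono fun _ hs => abs_le.2 hs)

theorem intervalIntegrable_kernel (hG : ContinuousOn G (Ioc 0 1))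
    (hG0 : Tendsto G (𝓝[>] 0) (𝓝 0)) (hp : 0 < p) (hc : 0 < c) :
    IntervalIntegrable (kernel p c G) volume 0 1 := by
  obtain ⟨t₀, hsmall, ht₀⟩ :=
    ((eventually_forall_Ioc_abs_le hG0 (half_pos hp)).and (Ioc_mem_nhdsGT zero_lt_one)).exists
  refine (intervalIntegrable_kernel_and_solution_mem_Icc hG hc (half_lt_self hp) ht₀ hsmall).1
    |>.trans ((continuousOn_kernel hG).mono ?_).intervalIntegrable
  rw [uIcc_of_le ht₀.2]
  exact fun x hx => ⟨ht₀.1.trans_le hx.1, hx.2⟩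

theorem tendsto_solution (hG : ContinuousOn G (Ioc 0 1)) (hG0 : Tendsto G (𝓝[>] 0) (𝓝 0))
    (hp : 0 < p) (hc : 0 < c) : Tendsto (solution p c G) (𝓝[>] 0) (𝓝 (1 / p)) := by
  have hcont : ∀ σ : ℝ, ContinuousAt (fun ε => 1 / (p + σ * ε)) 0 := fun σ =>
    continuousAt_const.div (by fun_prop) (by simpa using hp.ne')
  refine tendsto_of_eventually_mem_Icc (l' := 𝓝[>] 0) (lo := fun ε => 1 / (p + ε))
    (hi := fun ε => 1 / (p - ε)) ?_ ?_ ?_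
  · simpa using ((hcont 1).tendsto).mono_left nhdsWithin_le_nhds
  · simpa [sub_eq_add_neg] using ((hcont (-1)).tendsto).mono_left nhdsWithin_le_nhds
  filter_upwards [Ioo_mem_nhdsGT hp] with ε hε
  filter_upwards [eventually_forall_Ioc_abs_le hG0 hε.1, Ioc_mem_nhdsGT zero_lt_one]
    with t hsmall ht
  exact (intervalIntegrable_kernel_and_solution_mem_Icc hG hc hε.2 ht hsmall).2

theorem integral_eq_solution (hG : ContinuousOn G (Ioc 0 1)) (ht : t ∈ Ioc (0 : ℝ) 1) :
    1 / c * t ^ (-p / c) *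
        ∫ u in (0 : ℝ)..t, u ^ (p / c - 1) * exp (1 / c * ∫ s in u..t, G s / s) =
      solution p c G t := by
  rw [solution, integratingFactor, ← mul_assoc (1 / c), mul_assoc (1 / c * t ^ (-p / c)),
    ← intervalIntegral.integral_const_mul (exp (logPrimitive G t / c))]
  congr 1
  -- only a.e.: at `u = 0` the inner integral `∫ s in 0..t, G s / s` may diverge
  refine intervalIntegral.integral_congr_ae (ae_of_all _ fun u hu => ?_)
  rw [uIoc_of_le ht.1.le] at hu
  rw [← logPrimitive_sub hG ⟨hu.1, hu.2.trans ht.2⟩ ht,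
    show 1 / c * (logPrimitive G t - logPrimitive G u) =
      logPrimitive G t / c + -logPrimitive G u / c by ring, exp_add, kernel]
  ring

end SingularLinearODE

open SingularLinearODE

/-- The linear ODE [1 + b - G(t)] h(t) + c t h'(t) = 1, h(0) = 1/(1+b),
with G continuous on [0,1], G(0) = 0, b, c > 0, has the solution
h(t) = (1/c) t^{-(1+b)/c} ∫_0^t u^{(1+b)/c - 1} exp{(1/c) ∫_u^t G(s)/s ds} du on (0,1],
extended continuously to 0 with value 1/(1+b). -/
theorem ode_solution (b c : ℝ) (hb : 0 < b) (hc : 0 < c)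
    (G : ℝ → ℝ) (hG : ContinuousOn G (Set.Icc 0 1)) (hG0 : G 0 = 0)
    (h : ℝ → ℝ)
    (hh : ∀ t ∈ Set.Ioc (0:ℝ) 1, h t =
      (1 / c) * t ^ (-(1 + b) / c) *
        ∫ u in (0:ℝ)..t, u ^ ((1 + b) / c - 1) *
          Real.exp ((1 / c) * ∫ s in u..t, G s / s)) :
    (∀ t ∈ Set.Ioc (0:ℝ) 1, (1 + b - G t) * h t + c * t * derivWithin h (Set.Ioc 0 1) t = 1) ∧
    Tendsto h (nhdsWithin 0 (Set.Ioi 0)) (nhds (1 / (1 + b))) := by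
  have hp : 0 < 1 + b := by linarith
  have hG' : ContinuousOn G (Ioc 0 1) := hG.mono Ioc_subset_Icc_self
  have hG0' : Tendsto G (𝓝[>] 0) (𝓝 0) := by
    simpa only [hG0] using
      ((hG 0 ⟨le_rfl, zero_le_one⟩).mono_of_mem_nhdsWithin (Icc_mem_nhdsGT zero_lt_one)).tendsto
  have heq : EqOn h (solution (1 + b) c G) (Ioc 0 1) :=
    fun t ht => (hh t ht).trans (integral_eq_solution hG' ht)
  refine ⟨fun t ht => ?_, ?_⟩
  · rw [derivWithin_congr heq (heq ht), heq ht]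
    exact solution_ode hG' (intervalIntegrable_kernel hG' hG0' hp hc) hc ht
  · exact (tendsto_solution hG' hG0' hp hc).congr'
      (eventuallyEq_of_mem (Ioc_mem_nhdsGT zero_lt_one) heq.symm)
end
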